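/- The group Γ_k ⊆ U(p^k) (generated by the central S¹, the diagonal subgroup 𝒜_k, and the permutation subgroup ℬ_k) fits in a short exact sequence 1 → S¹ → Γ_k → (ℤ/p)^k × (ℤ/p)^k → 1, where S¹ is the center of U(p^k). -/

import Mathlib

/-!
Every generator of `Γ_k` commutes with each `A_r` and each `B_r` up to a scalar `ζ^a`, and
commutators with a fixed element are multiplicative as long as they are central. Hence
`g ↦ (⁅g, A_r⁆, ⁅g, B_r⁆)_r` is a homomorphism from `Γ_k` to
`(μ_p)^k × (μ_p)^k ≅ (ℤ/p)^k × (ℤ/p)^k`, onto because `⁅B_s, A_r⁆ = ζ^{δ_{rs}}`. Its kernel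
consists of the unitaries commuting with all `A_r` and `B_r`. Indexing the basis by digit vectors
in `(ℤ/p)^k`, the joint eigenvalues of the diagonal `A_r` separate the basis vectors, so such a
matrix is diagonal, and the `B_r` translate the indices transitively, so its diagonal is constant.
-/

open Function Subgroup
open scoped commutatorElement

section Commutator

variable {G : Type*} [Group G]

theorem commutatorElement_eq_iff_mul_eq {g h c : G} : ⁅g, h⁆ = c ↔ g * h = c * (h * g) := by
  rw [commutatorElement_def, mul_assoc (g * h), ← mul_inv_rev, mul_inv_eq_iff_eq_mul]

theorem commutatorElement_mul_left_of_mem_center {a b c : G} (h : ⁅b, c⁆ ∈ center G) :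
    ⁅a * b, c⁆ = ⁅b, c⁆ * ⁅a, c⁆ := by
  rw [commutatorElement_mul_left_eq_conj_mul, mem_center_iff.mp h a, mul_inv_cancel_right]

theorem commutatorElement_inv_left_of_mem_center {a b : G} (h : ⁅a, b⁆ ∈ center G) :
    ⁅a⁻¹, b⁆ = ⁅a, b⁆⁻¹ := by
  rw [commutatorElement_inv_left, ← commutatorElement_inv, mul_assoc,
    ← mem_center_iff.mp (inv_mem h) a, inv_mul_cancel_left]

theorem Subgroup.commutatorElement_mem_of_mem_closure {H : Subgroup G} (hH : H ≤ center G)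
    {S : Set G} {x g : G} (hS : ∀ y ∈ S, ⁅y, x⁆ ∈ H) (hg : g ∈ closure S) : ⁅g, x⁆ ∈ H := by
  induction hg using closure_induction with
  | mem y hy => exact hS y hy
  | one => simp [H.one_mem]
  | mul a b _ _ ha hb =>
    rw [commutatorElement_mul_left_of_mem_center (hH hb)]; exact H.mul_mem hb ha
  | inv a _ ha => rw [commutatorElement_inv_left_of_mem_center (hH ha)]; exact H.inv_mem ha

theorem exists_monoidHom_commutatorElement {Z J : Type*} [Group Z] {ι : Z →* G}
    (hι : Injective ι) (hcent : ι.range ≤ center G) {S : Set G} (x : J → G)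
    (hS : ∀ y ∈ S, ∀ j, ⁅y, x j⁆ ∈ ι.range) :
    ∃ Φ : closure S →* (J → Z), (∀ g j, ι (Φ g j) = ⁅(g : G), x j⁆) ∧
      ∀ g, Φ g = 1 ↔ ∀ j, Commute (g : G) (x j) := by
  have hmem (g : closure S) (j : J) : ⁅(g : G), x j⁆ ∈ ι.range :=
    commutatorElement_mem_of_mem_closure hcent (fun y hy => hS y hy j) g.2
  let f (g : closure S) (j : J) : Z := (MonoidHom.ofInjective hι).symm ⟨_, hmem g j⟩
  have hf (g : closure S) (j : J) : ι (f g j) = ⁅(g : G), x j⁆ :=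
    MonoidHom.apply_ofInjective_symm hι _
  refine ⟨MonoidHom.mk' f fun g h => funext fun j => hι ?_, hf, fun g => ?_⟩
  · rw [Pi.mul_apply, map_mul, hf, hf, hf, Subgroup.coe_mul,
      commutatorElement_mul_left_of_mem_center (hcent (hmem h j))]
    exact (mem_center_iff.mp (hcent (hmem h j)) _).symm
  · simp only [MonoidHom.mk'_apply, funext_iff, Pi.one_apply, ← hι.eq_iff, hf, map_one,
      commutatorElement_eq_one_iff_commute]

end Commutator

theorem ZMod.mem_zpowers_ofAdd_one {N : ℕ} (z : Multiplicative (ZMod N)) :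
    z ∈ zpowers (Multiplicative.ofAdd 1) := by
  obtain ⟨m, hm⟩ := ZMod.intCast_surjective (Multiplicative.toAdd z)
  exact ⟨m, show Multiplicative.ofAdd 1 ^ m = z by rw [← ofAdd_zsmul, zsmul_one, hm, ofAdd_toAdd]⟩

theorem MonoidHom.prod_surjective_of_mulSingle {Γ Z ι : Type*} [Group Γ] [CommGroup Z]
    [Finite ι] [DecidableEq ι] (Φ Ψ : Γ →* (ι → Z)) {c : Z} (hc : ∀ z, z ∈ zpowers c)
    (g h : ι → Γ) (hΦg : ∀ i, Φ (g i) = Pi.mulSingle i c) (hΨg : ∀ i, Ψ (g i) = 1)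
    (hΦh : ∀ i, Φ (h i) = 1) (hΨh : ∀ i, Ψ (h i) = Pi.mulSingle i c) :
    Surjective (Φ.prod Ψ) := by
  have hsingle (i : ι) (z : Z) :
      (Pi.mulSingle i z, 1) ∈ (Φ.prod Ψ).range ∧ (1, Pi.mulSingle i z) ∈ (Φ.prod Ψ).range := by
    obtain ⟨m, rfl⟩ := mem_zpowers_iff.mp (hc z)
    refine ⟨⟨g i ^ m, ?_⟩, ⟨h i ^ m, ?_⟩⟩ <;>
      simp [hΦg, hΨg, hΦh, hΨh, Pi.mulSingle_zpow]
  rintro ⟨x, y⟩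
  have hx : x ∈ (Φ.prod Ψ).range.comap (MonoidHom.inl _ _) :=
    pi_mem_of_mulSingle_mem x fun i => (hsingle i (x i)).1
  have hy : y ∈ (Φ.prod Ψ).range.comap (MonoidHom.inr _ _) :=
    pi_mem_of_mulSingle_mem y fun i => (hsingle i (y i)).2
  simpa using mul_mem (mem_comap.mp hx) (mem_comap.mp hy)

theorem Pi.apply_eq_apply_zero_of_add_single {ι X : Type*} [Fintype ι] [DecidableEq ι] {N : ℕ}
    [NeZero N] {f : (ι → ZMod N) → X} (hf : ∀ u r, f (u + Pi.single r 1) = f u)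
    (v : ι → ZMod N) : f v = f 0 := by
  let S : AddSubmonoid (ι → ZMod N) :=
    { carrier := {w | ∀ u, f (u + w) = f u}
      zero_mem' := by simp
      add_mem' := fun {a b} ha hb u => by rw [← add_assoc, hb (u + a), ha u] }
  have hsingle (r : ι) (m : ℕ) : Pi.single r (m : ZMod N) ∈ S := by
    induction m with
    | zero => simp [S.zero_mem]
    | succ m ih =>
      rw [Nat.cast_succ, Pi.single_add]
      exact S.add_mem ih fun u => hf u r
  have hv : v ∈ S := by
    rw [← Finset.univ_sum_single v]
    exact AddSubmonoid.sum_mem S fun r _ => ZMod.natCast_zmod_val (v r) ▸ hsingle r (v r).val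
  simpa using hv 0

namespace Matrix

section

variable {n R : Type*} [Fintype n] [DecidableEq n]

theorem apply_eq_zero_of_commute_diagonal [CommRing R] [NoZeroDivisors R] {d : n → R}
    {M : Matrix n n R} (h : Commute (diagonal d) M) {i j : n} (hij : d i ≠ d j) : M i j = 0 := by
  have hdM := congrFun₂ h.eq i j
  rw [diagonal_mul, mul_diagonal, mul_comm] at hdM
  by_contra hM
  exact hij (mul_left_cancel₀ hM hdM)

theorem apply_apply_eq_of_commute_permMatrix [NonAssocSemiring R] {σ : Equiv.Perm n}
    {M : Matrix n n R} (h : Commute (σ.permMatrix R) M) (i j : n) : M (σ i) (σ j) = M i j := by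
  have := congrFun₂ h.eq i (σ j)
  rwa [PEquiv.toMatrix_toPEquiv_mul, PEquiv.mul_toMatrix_toPEquiv, submatrix_apply,
    submatrix_apply, id, id, Equiv.symm_apply_apply] at this

theorem permMatrix_mul_diagonal [CommSemiring R] (σ : Equiv.Perm n) (d : n → R) :
    σ.permMatrix R * diagonal d = diagonal (d ∘ σ) * σ.permMatrix R := by
  rw [PEquiv.toMatrix_toPEquiv_mul, PEquiv.mul_toMatrix_toPEquiv]
  ext i j
  simp [diagonal_apply, Equiv.eq_symm_apply, eq_comm]

theorem mem_center_unitaryGroup_of_coe_eq_smul_one {g : unitaryGroup n ℂ} {z : ℂ}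
    (hg : (g : Matrix n n ℂ) = z • 1) : g ∈ center (unitaryGroup n ℂ) :=
  mem_center_iff.mpr fun h => Subtype.ext <| by simp [hg]

variable (n) in
def scalarUnitary : Circle →* unitaryGroup n ℂ where
  toFun z := ⟨(z : ℂ) • 1, by
    simp [mem_unitaryGroup_iff, smul_smul, ← Complex.normSq_eq_conj_mul_self]⟩
  map_one' := by ext : 1; simp
  map_mul' z w := by ext : 1; simp [smul_smul, mul_comm]

@[simp]
theorem coe_scalarUnitary (z : Circle) : (scalarUnitary n z : Matrix n n ℂ) = (z : ℂ) • 1 := rfl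

variable (n) in
noncomputable def scalarRootOfUnity (N : ℕ) [NeZero N] :
    Multiplicative (ZMod N) →* unitaryGroup n ℂ :=
  (scalarUnitary n).comp ZMod.toCircle.toMonoidHom

variable {N : ℕ} [NeZero N]

theorem scalarRootOfUnity_injective [Nonempty n] : Injective (scalarRootOfUnity n N) := by
  intro a b h
  obtain ⟨i⟩ := ‹Nonempty n›
  apply Multiplicative.toAdd.injective
  apply ZMod.injective_toCircle
  apply Circle.coe_injective
  simpa [scalarRootOfUnity] using congrFun₂ (congrArg Subtype.val h) i i

theorem range_scalarRootOfUnity_le_center :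
    (scalarRootOfUnity n N).range ≤ center (unitaryGroup n ℂ) := by
  rintro _ ⟨a, rfl⟩
  exact mem_center_unitaryGroup_of_coe_eq_smul_one (coe_scalarUnitary _)

end

variable {n ι : Type*} {N : ℕ} (e : n ≃ (ι → ZMod N))

def shiftPerm [DecidableEq ι] (r : ι) : Equiv.Perm n :=
  e.symm.permCongr (Equiv.addRight (Pi.single r 1))

@[simp]
theorem apply_shiftPerm [DecidableEq ι] (r : ι) (i : n) :
    e (shiftPerm e r i) = e i + Pi.single r 1 := by
  simp [shiftPerm, Equiv.permCongr_apply]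

variable [Fintype n] [DecidableEq n] {A B : ι → unitaryGroup n ℂ}

noncomputable def clockMatrix [NeZero N] (r : ι) : Matrix n n ℂ :=
  diagonal fun i => (ZMod.toCircle (e i r) : ℂ)

theorem commute_clockMatrix [NeZero N] (r s : ι) : Commute (clockMatrix e r) (clockMatrix e s) :=
  commute_diagonal _ _

theorem commutatorElement_clock_clock [NeZero N]
    (hA : ∀ r, (A r : Matrix n n ℂ) = clockMatrix e r) (s r : ι) : ⁅A s, A r⁆ = 1 :=
  commutatorElement_eq_one_iff_commute.mpr <| Subtype.ext <| by
    simp [hA, (commute_clockMatrix e s r).eq]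

variable [DecidableEq ι]

def shiftMatrix (r : ι) : Matrix n n ℂ := (shiftPerm e r).permMatrix ℂ

theorem commute_shiftMatrix (r s : ι) : Commute (shiftMatrix e r) (shiftMatrix e s) := by
  have : shiftPerm e s * shiftPerm e r = shiftPerm e r * shiftPerm e s :=
    Equiv.ext fun i => e.injective <| by simp [add_right_comm]
  rw [commute_iff_eq, shiftMatrix, shiftMatrix, ← permMatrix_mul, this, permMatrix_mul]

theorem commutatorElement_shift_shift (hB : ∀ r, (B r : Matrix n n ℂ) = shiftMatrix e r)
    (s r : ι) : ⁅B s, B r⁆ = 1 :=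
  commutatorElement_eq_one_iff_commute.mpr <| Subtype.ext <| by
    simp [hB, (commute_shiftMatrix e s r).eq]

variable [NeZero N]

theorem shiftMatrix_mul_clockMatrix (r s : ι) :
    shiftMatrix e s * clockMatrix e r =
      (ZMod.toCircle ((Pi.single s 1 : ι → ZMod N) r) : ℂ) •
        (clockMatrix e r * shiftMatrix e s) := by
  rw [shiftMatrix, clockMatrix, permMatrix_mul_diagonal, ← smul_mul_assoc, ← diagonal_smul]
  congr 2
  ext i
  simp [AddChar.map_add_eq_mul, mul_comm]

theorem commutatorElement_shift_clock (hA : ∀ r, (A r : Matrix n n ℂ) = clockMatrix e r)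
    (hB : ∀ r, (B r : Matrix n n ℂ) = shiftMatrix e r) (s r : ι) :
    ⁅B s, A r⁆ = scalarRootOfUnity n N
      ((Pi.mulSingle s (Multiplicative.ofAdd 1) : ι → Multiplicative (ZMod N)) r) := by
  rw [Pi.mulSingle_multiplicativeOfAdd_eq (M := fun _ => ZMod N)]
  exact commutatorElement_eq_iff_mul_eq.mpr <| Subtype.ext <| by
    simp [hA, hB, shiftMatrix_mul_clockMatrix, scalarRootOfUnity]

theorem commutatorElement_mem_range_scalarRootOfUnity
    (hA : ∀ r, (A r : Matrix n n ℂ) = clockMatrix e r)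
    (hB : ∀ r, (B r : Matrix n n ℂ) = shiftMatrix e r) {y : unitaryGroup n ℂ}
    (hy : y ∈ {g : unitaryGroup n ℂ | ∃ z : ℂ, (g : Matrix n n ℂ) = z • 1}
      ∪ Set.range A ∪ Set.range B) (r : ι) :
    ⁅y, A r⁆ ∈ (scalarRootOfUnity n N).range ∧ ⁅y, B r⁆ ∈ (scalarRootOfUnity n N).range := by
  rcases hy with (⟨z, hz⟩ | ⟨s, rfl⟩) | ⟨s, rfl⟩
  · have hy := mem_center_iff.mp (mem_center_unitaryGroup_of_coe_eq_smul_one hz)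
    simp [commutatorElement_eq_one_iff_commute.mpr (hy _).symm, one_mem]
  · rw [commutatorElement_clock_clock e hA, ← commutatorElement_inv,
      commutatorElement_shift_clock e hA hB]
    exact ⟨one_mem _, inv_mem ⟨_, rfl⟩⟩
  · rw [commutatorElement_shift_clock e hA hB, commutatorElement_shift_shift e hB]
    exact ⟨⟨_, rfl⟩, one_mem _⟩

variable [Fintype ι]

theorem eq_smul_one_of_forall_commute {M : Matrix n n ℂ}
    (hA : ∀ r, Commute (clockMatrix e r) M) (hB : ∀ r, Commute (shiftMatrix e r) M) :
    M = M (e.symm 0) (e.symm 0) • 1 := by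
  have hoff {i j : n} (hij : i ≠ j) : M i j = 0 := by
    obtain ⟨r, hr⟩ := Function.ne_iff.mp (e.injective.ne hij)
    refine apply_eq_zero_of_commute_diagonal (hA r) fun h => hr ?_
    exact ZMod.injective_toCircle (Circle.coe_injective h)
  have hdiag (i : n) : M i i = M (e.symm 0) (e.symm 0) := by
    have := Pi.apply_eq_apply_zero_of_add_single (f := fun v => M (e.symm v) (e.symm v))
      (fun u r => ?_) (e i)
    · simpa using this
    · have := apply_apply_eq_of_commute_permMatrix (hB r) (e.symm u) (e.symm u)
      rw [← this]
      congr <;> apply e.injective <;> simp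
  ext i j
  by_cases hij : i = j
  · subst hij; simp [hdiag]
  · simp [hoff hij, hij]

theorem forall_commute_clock_shift_iff (hA : ∀ r, (A r : Matrix n n ℂ) = clockMatrix e r)
    (hB : ∀ r, (B r : Matrix n n ℂ) = shiftMatrix e r) (g : unitaryGroup n ℂ) :
    ((∀ r, Commute g (A r)) ∧ ∀ r, Commute g (B r)) ↔ ∃ z : ℂ, (g : Matrix n n ℂ) = z • 1 := by
  constructor
  · rintro ⟨hgA, hgB⟩
    refine ⟨_, eq_smul_one_of_forall_commute e (fun r => ?_) (fun r => ?_)⟩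
    · simpa [hA] using ((hgA r).map (unitaryGroup n ℂ).subtype).symm
    · simpa [hB] using ((hgB r).map (unitaryGroup n ℂ).subtype).symm
  · rintro ⟨z, hz⟩
    have hg := mem_center_iff.mp (mem_center_unitaryGroup_of_coe_eq_smul_one hz)
    exact ⟨fun r => (hg (A r)).symm, fun r => (hg (B r)).symm⟩

theorem exists_surjective_monoidHom_eq_one_iff_scalar
    (hA : ∀ r, (A r : Matrix n n ℂ) = clockMatrix e r)
    (hB : ∀ r, (B r : Matrix n n ℂ) = shiftMatrix e r) :
    ∃ φ : Subgroup.closure ({g : unitaryGroup n ℂ | ∃ z : ℂ, (g : Matrix n n ℂ) = z • 1}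
        ∪ Set.range A ∪ Set.range B) →*
        (ι → Multiplicative (ZMod N)) × (ι → Multiplicative (ZMod N)),
      Surjective φ ∧ ∀ g, φ g = 1 ↔ ∃ z : ℂ, ((g : unitaryGroup n ℂ) : Matrix n n ℂ) = z • 1 := by
  have : Nonempty n := ⟨e.symm 0⟩
  obtain ⟨Φ, hΦ, hΦ1⟩ := exists_monoidHom_commutatorElement (scalarRootOfUnity_injective (n := n))
    range_scalarRootOfUnity_le_center A fun y hy r =>
      (commutatorElement_mem_range_scalarRootOfUnity e hA hB hy r).1
  obtain ⟨Ψ, hΨ, hΨ1⟩ := exists_monoidHom_commutatorElement (scalarRootOfUnity_injective (n := n))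
    range_scalarRootOfUnity_le_center B fun y hy r =>
      (commutatorElement_mem_range_scalarRootOfUnity e hA hB hy r).2
  refine ⟨Φ.prod Ψ, ?_, fun g => ?_⟩
  · refine MonoidHom.prod_surjective_of_mulSingle Φ Ψ ZMod.mem_zpowers_ofAdd_one
      (fun s => ⟨B s, subset_closure (Or.inr ⟨s, rfl⟩)⟩)
      (fun s => ⟨A s, subset_closure (Or.inl (Or.inr ⟨s, rfl⟩))⟩⁻¹) ?_ ?_ ?_ ?_ <;>
      intro s <;> funext r <;> apply scalarRootOfUnity_injective (n := n)
    · rw [hΦ, commutatorElement_shift_clock e hA hB]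
    · rw [hΨ, commutatorElement_shift_shift e hB, Pi.one_apply, map_one]
    · rw [map_inv, Pi.inv_apply, map_inv, hΦ, commutatorElement_clock_clock e hA]; simp
    · rw [map_inv, Pi.inv_apply, map_inv, hΨ, ← commutatorElement_inv,
        commutatorElement_shift_clock e hA hB, inv_inv, Pi.mulSingle_comm]
  · rw [MonoidHom.prod_apply, Prod.mk_eq_one, hΦ1, hΨ1, forall_commute_clock_shift_iff e hA hB]

end Matrix

theorem ZMod.val_add_one_eq_ite {n : ℕ} [NeZero n] (a : ZMod n) :
    (a + 1).val = if a.val < n - 1 then a.val + 1 else 0 := by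
  have ha := a.val_lt
  rw [ZMod.val_add, ZMod.val_one_eq_one_mod, Nat.add_mod_mod]
  split_ifs with h
  · exact Nat.mod_eq_of_lt (by omega)
  · rw [show a.val + 1 = n by omega, Nat.mod_self]

theorem ZMod.finEquiv_apply (n : ℕ) [NeZero n] (x : Fin n) : ZMod.finEquiv n x = (x : ℕ) := by
  obtain ⟨m, rfl⟩ := Nat.exists_eq_succ_of_ne_zero (NeZero.ne n)
  exact (Fin.cast_val_eq_self x).symm

theorem ZMod.coe_finEquiv_symm (n : ℕ) [NeZero n] (a : ZMod n) :
    ((ZMod.finEquiv n).symm a : ℕ) = a.val := by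
  conv_rhs => rw [← (ZMod.finEquiv n).apply_symm_apply a, ZMod.finEquiv_apply, ZMod.val_natCast,
    Nat.mod_eq_of_lt (Fin.is_lt _)]

section Digits

variable {p k : ℕ} [NeZero p]

variable (p k) in
def digitsEquiv : Fin (p ^ k) ≃ (Fin k → ZMod p) :=
  finFunctionFinEquiv.symm.trans (Equiv.piCongrRight fun _ => (ZMod.finEquiv p).toEquiv)

theorem digitsEquiv_apply (i : Fin (p ^ k)) (r : Fin k) :
    digitsEquiv p k i r = ((i / p ^ (r : ℕ) : ℕ) : ZMod p) := by
  simp [digitsEquiv, ZMod.finEquiv_apply, finFunctionFinEquiv_symm_apply_val]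

theorem coe_digitsEquiv_symm (v : Fin k → ZMod p) :
    ((digitsEquiv p k).symm v : ℕ) = ∑ s, (v s).val * p ^ (s : ℕ) := by
  simp [digitsEquiv, ZMod.coe_finEquiv_symm]

theorem coe_shiftPerm_digitsEquiv (r : Fin k) (i : Fin (p ^ k)) :
    (Matrix.shiftPerm (digitsEquiv p k) r i : ℕ) =
      if (i / p ^ (r : ℕ)) % p < p - 1 then i + p ^ (r : ℕ) else i - (p - 1) * p ^ (r : ℕ) := by
  set v := digitsEquiv p k i
  have hsum : (Matrix.shiftPerm (digitsEquiv p k) r i : ℕ) + (v r).val * p ^ (r : ℕ) =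
      i + (v r + 1).val * p ^ (r : ℕ) := by
    have hshift : Matrix.shiftPerm (digitsEquiv p k) r i =
        (digitsEquiv p k).symm (v + Pi.single r 1) := by
      rw [← Matrix.apply_shiftPerm, Equiv.symm_apply_apply]
    have hi : i = (digitsEquiv p k).symm v := (Equiv.symm_apply_apply _ i).symm
    have hrest : ∑ s ∈ Finset.univ.erase r,
          ((v + Pi.single r 1 : Fin k → ZMod p) s).val * p ^ (s : ℕ) =
        ∑ s ∈ Finset.univ.erase r, (v s).val * p ^ (s : ℕ) :=
      Finset.sum_congr rfl fun s hs => by simp [Finset.ne_of_mem_erase hs]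
    conv_rhs => rw [hi]
    rw [hshift, coe_digitsEquiv_symm, coe_digitsEquiv_symm,
      ← Finset.add_sum_erase _ _ (Finset.mem_univ r),
      ← Finset.add_sum_erase _ _ (Finset.mem_univ r), hrest]
    simp only [Pi.add_apply, Pi.single_eq_same]
    ring
  have hv : (v r).val = i / p ^ (r : ℕ) % p := by
    rw [show v r = _ from digitsEquiv_apply i r, ZMod.val_natCast]
  have hlt : (v r).val < p := (v r).val_lt
  rw [ZMod.val_add_one_eq_ite, hv] at hsum
  rw [hv] at hlt
  split_ifs at hsum ⊢ with h
  · rw [add_mul, one_mul] at hsum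
    omega
  · rw [show i / p ^ (r : ℕ) % p = p - 1 by omega] at hsum
    omega

theorem clockMatrix_digitsEquiv (r : Fin k) :
    Matrix.clockMatrix (digitsEquiv p k) r =
      Matrix.diagonal fun i : Fin (p ^ k) =>
        Complex.exp (2 * Real.pi * Complex.I / p) ^ ((i : ℕ) / p ^ (r : ℕ)) := by
  unfold Matrix.clockMatrix
  congr 1
  funext i
  rw [digitsEquiv_apply, ZMod.toCircle_natCast, ← Complex.exp_nat_mul]
  ring_nf

theorem shiftMatrix_digitsEquiv (r : Fin k) :
    Matrix.shiftMatrix (digitsEquiv p k) r =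
      Matrix.of fun i j : Fin (p ^ k) =>
        if (j : ℕ) = (if ((i : ℕ) / p ^ (r : ℕ)) % p < p - 1
            then (i : ℕ) + p ^ (r : ℕ)
            else (i : ℕ) - (p - 1) * p ^ (r : ℕ))
        then (1 : ℂ) else 0 := by
  ext i j
  rw [Matrix.of_apply, ← coe_shiftPerm_digitsEquiv]
  simp [Matrix.shiftMatrix, PEquiv.toMatrix_apply, Fin.val_inj, eq_comm]

end Digits

/-- The group `Γ_k ⊆ U(p^k)`, generated by the central `S¹`, the diagonal matrices `A_r` with
`(A_r)_{ii} = ζ^{⌊i/p^r⌋}` (`ζ = e^{2πi/p}`, `i = 0, …, p^k - 1`), and the permutation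
matrices `B_r` of the translations `σ_r`, fits in a short exact sequence
`1 → S¹ → Γ_k → (ℤ/p)^k × (ℤ/p)^k → 1`: there is a surjective homomorphism
`Γ_k → (ℤ/p)^k × (ℤ/p)^k` whose kernel is exactly the subgroup of scalar matrices. -/
theorem Gamma_k_ses (p k : ℕ) [Fact p.Prime] (ζ : ℂ)
    (hζ : ζ = Complex.exp (2 * Real.pi * Complex.I / p))
    (A B : Fin k → Matrix.unitaryGroup (Fin (p ^ k)) ℂ)
    (hA : ∀ r : Fin k, (A r : Matrix (Fin (p ^ k)) (Fin (p ^ k)) ℂ)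
      = Matrix.diagonal fun i : Fin (p ^ k) => ζ ^ ((i : ℕ) / p ^ (r : ℕ)))
    (hB : ∀ r : Fin k, (B r : Matrix (Fin (p ^ k)) (Fin (p ^ k)) ℂ)
      = Matrix.of fun i j : Fin (p ^ k) =>
          if (j : ℕ) = (if ((i : ℕ) / p ^ (r : ℕ)) % p < p - 1
              then (i : ℕ) + p ^ (r : ℕ)
              else (i : ℕ) - (p - 1) * p ^ (r : ℕ))
          then (1 : ℂ) else 0)
    (Γ : Subgroup (Matrix.unitaryGroup (Fin (p ^ k)) ℂ))
    (hΓ : Γ = Subgroup.closure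
      ({g : Matrix.unitaryGroup (Fin (p ^ k)) ℂ |
          ∃ z : ℂ, (g : Matrix (Fin (p ^ k)) (Fin (p ^ k)) ℂ)
            = z • (1 : Matrix (Fin (p ^ k)) (Fin (p ^ k)) ℂ)}
        ∪ Set.range A ∪ Set.range B)) :
    ∃ φ : Γ →* (Fin k → Multiplicative (ZMod p)) × (Fin k → Multiplicative (ZMod p)),
      Function.Surjective φ ∧
      ∀ g : Γ, φ g = 1 ↔
        ∃ z : ℂ, ((g : Matrix.unitaryGroup (Fin (p ^ k)) ℂ)
            : Matrix (Fin (p ^ k)) (Fin (p ^ k)) ℂ)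
          = z • (1 : Matrix (Fin (p ^ k)) (Fin (p ^ k)) ℂ) := by
  have : NeZero p := ⟨(Fact.out : p.Prime).ne_zero⟩
  subst hΓ
  refine Matrix.exists_surjective_monoidHom_eq_one_iff_scalar (digitsEquiv p k) (fun r => ?_)
    (fun r => ?_)
  · rw [hA, hζ, clockMatrix_digitsEquiv]
  · rw [hB, shiftMatrix_digitsEquiv]
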